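/- If G^min is a minimally oriented graph for a bi-directed graph G, then there exists a total order ≤ on the vertex set extending strict boundary containment such that G^min equals the graph G^min_< produced by Algorithm 4.2 from G and ≤. -/

import Mathlib

/-- Possible edge types between an ordered pair of distinct vertices of a
simple mixed graph.  `arrowTo` at `(v, w)` means `v → w`, `arrowFrom` means
`v ← w`, `undir` means `v − w` and `bidir` means `v ↔ w`. -/
inductive EType : Type
  | none | undir | arrowTo | arrowFrom | bidir
deriving DecidableEq

/-- The edge type seen from the reversed ordered pair of vertices. -/
def EType.mirror : EType → EType
  | .none => .none
  | .undir => .undir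
  | .arrowTo => .arrowFrom
  | .arrowFrom => .arrowTo
  | .bidir => .bidir

/-- A simple mixed graph: at most one edge (undirected, directed or
bi-directed) between any two distinct vertices, and no self loops. -/
structure MixedGraph (V : Type) where
  E : V → V → EType
  no_loop : ∀ v, E v v = .none
  symm : ∀ v w, E w v = (E v w).mirror

/-- `(a, b, c)` are three consecutive vertices on the path `p`. -/
def ConsecTriple {V : Type} (p : List V) (a b c : V) : Prop :=
  ∃ l1 l2, p = l1 ++ a :: b :: c :: l2

namespace MixedGraph

variable {V : Type} (G : MixedGraph V)

/-- `v − w` is an edge of `G`. -/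
def Undir (v w : V) : Prop := G.E v w = .undir

/-- `v → w` is an edge of `G`. -/
def Dir (v w : V) : Prop := G.E v w = .arrowTo

/-- `v ↔ w` is an edge of `G`. -/
def Bidir (v w : V) : Prop := G.E v w = .bidir

/-- `v` and `w` are adjacent (joined by some edge). -/
def Adj (v w : V) : Prop := G.E v w ≠ .none

/-- The edge between `a` and `b` has an arrowhead at `b`. -/
def HeadAt (a b : V) : Prop := G.E a b = .arrowTo ∨ G.E a b = .bidir

/-- Closed boundary: `v` together with its adjacent vertices. -/
def Bd (v : V) : Set V := insert v {w | G.Adj v w}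

/-- A set of vertices is complete if all of its pairs of distinct
vertices are adjacent. -/
def Complete (S : Set V) : Prop := ∀ v ∈ S, ∀ w ∈ S, v ≠ w → G.Adj v w

/-- A vertex is simplicial if its closed boundary is complete. -/
def Simplicial (v : V) : Prop := G.Complete (G.Bd v)

/-- `v` is an ancestor of `w`: `v = w` or there is a directed path from
`v` to `w`. -/
def Anc (v w : V) : Prop := Relation.ReflTransGen G.Dir v w

/-- The set of ancestors of vertices in `C`. -/
def anSet (C : Set V) : Set V := {v | ∃ c ∈ C, G.Anc v c}

/-- `G` is an ancestral graph. -/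
def Ancestral : Prop :=
  (∀ v w, G.Dir v w → ¬ G.Anc w v) ∧
  (∀ v w, G.Undir v w → ∀ u, ¬ G.HeadAt u v) ∧
  (∀ v w, G.Bidir v w → ¬ G.Anc v w)

/-- The boundary containment property. -/
def BdContain : Prop :=
  (∀ v w, G.Undir v w → G.Bd v = G.Bd w) ∧
  (∀ v w, G.Dir v w → G.Bd v ⊆ G.Bd w)

/-- `b` is a collider between consecutive neighbours `a` and `c`. -/
def Collider (a b c : V) : Prop := G.HeadAt a b ∧ G.HeadAt c b

/-- A path: a list of distinct vertices, consecutive ones adjacent. -/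
def IsPath (p : List V) : Prop := p.Nodup ∧ p.Chain' G.Adj

/-- `p` is an m-connecting path given `C`: every non-collider on it is
outside `C` and every collider on it is an ancestor of `C`. -/
def IsMConnPath (C : Set V) (p : List V) : Prop :=
  G.IsPath p ∧
  ∀ a b c, ConsecTriple p a b c →
    (G.Collider a b c → b ∈ G.anSet C) ∧ (¬ G.Collider a b c → b ∉ C)

/-- `v` and `w` are m-connected given `C`. -/
def MConn (v w : V) (C : Set V) : Prop :=
  ∃ p, G.IsMConnPath C p ∧ p.head? = some v ∧ p.getLast? = some w

/-- `v` and `w` are m-separated given `C`. -/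
def MSep (v w : V) (C : Set V) : Prop := ¬ G.MConn v w C

/-- A maximal (ancestral) graph: every pair of distinct non-adjacent
vertices is m-separated given some set. -/
def Maximal : Prop :=
  ∀ v w, v ≠ w → ¬ G.Adj v w → ∃ C : Set V, v ∉ C ∧ w ∉ C ∧ G.MSep v w C

/-- `G` is a bi-directed graph. -/
def Bidirected : Prop := ∀ v w, G.E v w = .none ∨ G.E v w = .bidir

/-- `G` is an undirected graph. -/
def UndirectedG : Prop := ∀ v w, G.E v w = .none ∨ G.E v w = .undir

/-- `G` is a directed acyclic graph. -/
def IsDAG : Prop :=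
  (∀ v w, G.E v w = .none ∨ G.E v w = .arrowTo ∨ G.E v w = .arrowFrom) ∧
  (∀ v w, G.Dir v w → ¬ G.Anc w v)

/-- `G` and `H` have the same skeleton. -/
def SameSkeleton (H : MixedGraph V) : Prop := ∀ v w, G.Adj v w ↔ H.Adj v w

/-- `G` and `H` are Markov equivalent: their m-separation relations
coincide. -/
def MarkovEquiv (H : MixedGraph V) : Prop :=
  ∀ v w (C : Set V), v ≠ w → v ∉ C → w ∉ C → (G.MSep v w C ↔ H.MSep v w C)

open Classical in
/-- The edge map obtained from `G` by dropping all arrowheads at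
simplicial vertices. -/
noncomputable def dropE (v w : V) : EType :=
  match G.E v w with
  | .none => .none
  | .undir => .undir
  | .arrowTo => if G.Simplicial w then .undir else .arrowTo
  | .arrowFrom => if G.Simplicial v then .undir else .arrowFrom
  | .bidir =>
      if G.Simplicial v then (if G.Simplicial w then .undir else .arrowTo)
      else (if G.Simplicial w then .arrowFrom else .bidir)

/-- The graph obtained from `G` by dropping all arrowheads at simplicial
vertices; for a bi-directed graph `G` this is the simplicial graph `Gˢ`. -/
noncomputable def drop : MixedGraph V where
  E := G.dropE
  no_loop v := by simp [dropE, G.no_loop]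
  symm v w := by
    unfold dropE
    rw [G.symm v w]
    cases h : G.E v w <;>
      simp only [EType.mirror] <;> split_ifs <;> simp_all [EType.mirror]

open Classical in
/-- The edge map of the minimally oriented graph `G^min_<`: starting from
the simplicial graph, each bi-directed edge `v ↔ w` with `Bd v ⊆ Bd w`
and `v < w` is replaced by `v → w`. -/
noncomputable def gminE [LinearOrder V] (v w : V) : EType :=
  match G.dropE v w with
  | .bidir =>
      if G.Bd v ⊆ G.Bd w ∧ v < w then .arrowTo
      else if G.Bd w ⊆ G.Bd v ∧ w < v then .arrowFrom
      else .bidir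
  | e => e

/-- The graph `G^min_<` produced by Algorithm 4.2 from `G` and the total
order on `V`. -/
noncomputable def gmin [LinearOrder V] : MixedGraph V where
  E := G.gminE
  no_loop v := by
    have h := G.drop.no_loop v
    simp only [drop] at h
    simp [gminE, h]
  symm v w := by
    have h := G.drop.symm v w
    simp only [drop] at h
    unfold gminE
    rw [h]
    cases hE : G.dropE v w <;> simp only [EType.mirror]
    case bidir =>
      by_cases c1 : G.Bd v ⊆ G.Bd w ∧ v < w
      · have c2 : ¬ (G.Bd w ⊆ G.Bd v ∧ w < v) := fun h' => lt_asymm c1.2 h'.2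
        simp [c1, c2, EType.mirror]
      · by_cases c2 : G.Bd w ⊆ G.Bd v ∧ w < v
        · simp [c1, c2, EType.mirror]
        · simp [c1, c2, EType.mirror]

/-- Total number of arrowheads of `G`: the number of directed edges plus
twice the number of bi-directed edges. -/
noncomputable def arr : ℕ :=
  {p : V × V | G.Dir p.1 p.2}.ncard + {p : V × V | G.Bidir p.1 p.2}.ncard

end MixedGraph

/-- `Gm` is a minimally oriented graph for `G`. -/
def MinOriented {V : Type} (G Gm : MixedGraph V) : Prop :=
  Gm.Ancestral ∧ Gm.Maximal ∧ G.MarkovEquiv Gm ∧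
  ∀ H : MixedGraph V, H.Ancestral → H.Maximal → G.MarkovEquiv H → Gm.arr ≤ H.arr


/-!
Markov equivalence and maximality pin down the skeleton of `Gm` (it is that of `G`) and its
tails: a tail at `v` on an edge `v ∗−∗ w` forces `Bd v ⊆ Bd w`, and a vertex carrying no
arrowhead is simplicial. Hence some linear order extends both strict boundary containment and
the directed edges of `Gm`, and for such an order every arrowhead of `G^min_<` is an arrowhead
of `Gm`. On the other hand `G^min_<` is itself a maximal ancestral graph Markov equivalent to
`G`: in both graphs, `v` and `w` are m-connected given `C` exactly when `w` is reachable from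
`v` through vertices of `C`. Minimality of `Gm` then forces the two arrowhead sets to coincide,
and a mixed graph is determined by its skeleton and its arrowheads.
-/

namespace ConsecTriple

variable {α : Type} {r : α → α → Prop} {l : List α} {a b c : α}

theorem rel (h : ConsecTriple l a b c) (hl : l.IsChain r) : r a b ∧ r b c := by
  obtain ⟨l₁, l₂, rfl⟩ := h
  have := (List.isChain_append.mp hl).2.1
  simp only [List.isChain_cons_cons] at this
  exact ⟨this.1, this.2.1⟩

theorem mem_left (h : ConsecTriple l a b c) : a ∈ l := by
  obtain ⟨l₁, l₂, rfl⟩ := h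
  simp

theorem mem_right (h : ConsecTriple l a b c) : c ∈ l := by
  obtain ⟨l₁, l₂, rfl⟩ := h
  simp

theorem mem_tail (h : ConsecTriple l a b c) : b ∈ l.tail := by
  obtain ⟨l₁, l₂, rfl⟩ := h
  cases l₁ <;> simp

theorem mem_dropLast (h : ConsecTriple l a b c) : b ∈ l.dropLast := by
  obtain ⟨l₁, l₂, rfl⟩ := h
  simp [List.dropLast_append_of_ne_nil]

theorem ne_of_nodup (h : ConsecTriple l a b c) (hl : l.Nodup) : a ≠ c := by
  obtain ⟨l₁, l₂, rfl⟩ := h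
  rintro rfl
  simp [List.nodup_append] at hl

theorem ne_of_head? (h : ConsecTriple l a b c) (hl : l.Nodup) {v : α}
    (hv : l.head? = some v) : b ≠ v := by
  obtain ⟨t, rfl⟩ := List.head?_eq_some_iff.mp hv
  rintro rfl
  exact (List.nodup_cons.mp hl).1 h.mem_tail

theorem ne_of_getLast? (h : ConsecTriple l a b c) (hl : l.Nodup) {w : α}
    (hw : l.getLast? = some w) : b ≠ w := by
  obtain ⟨m, rfl⟩ := List.getLast?_eq_some_iff.mp hw
  rintro rfl
  have hb : b ∈ m := by simpa using h.mem_dropLast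
  exact (List.nodup_append.mp hl).2.2 b hb b (List.mem_singleton_self b) rfl

end ConsecTriple

theorem List.exists_consecTriple_of_mem {α : Type} {l : List α} {x : α} (hx : x ∈ l) :
    l.head? = some x ∨ l.getLast? = some x ∨ ∃ a c, ConsecTriple l a x c := by
  obtain ⟨s, t, rfl⟩ := List.mem_iff_append.mp hx
  rcases s.eq_nil_or_concat with rfl | ⟨s', a, rfl⟩
  · simp
  · rcases t with _ | ⟨c, t'⟩
    · simp
    · exact Or.inr (Or.inr ⟨a, c, s', t', by simp⟩)

theorem List.IsChain.reflTransGen {α : Type} {r : α → α → Prop} {l : List α} {a b : α}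
    (hl : l.IsChain r) (ha : l.head? = some a) (hb : l.getLast? = some b) :
    Relation.ReflTransGen r a b := by
  obtain ⟨t, rfl⟩ := List.head?_eq_some_iff.mp ha
  refine List.relationReflTransGen_of_exists_isChain_cons t hl ?_
  rwa [List.getLast?_eq_getLast_of_ne_nil (List.cons_ne_nil _ _), Option.some_inj] at hb

theorem Relation.ReflTransGen.exists_chordless_chain {α : Type} {r : α → α → Prop} {a b : α}
    (h : Relation.ReflTransGen r a b) :
    ∃ l : List α, l.IsChain r ∧ l.head? = some a ∧ l.getLast? = some b ∧ l.Nodup ∧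
      ∀ x y z, ConsecTriple l x y z → ¬ r x z := by
  let S : Set (List α) := {l | l.IsChain r ∧ l.head? = some a ∧ l.getLast? = some b}
  obtain ⟨l₀, hl₀, hlast⟩ := List.exists_isChain_cons_of_relationReflTransGen h
  have hS : a :: l₀ ∈ S :=
    ⟨hl₀, rfl, by rw [List.getLast?_eq_getLast_of_ne_nil (List.cons_ne_nil _ _), hlast]⟩
  obtain ⟨l, ⟨hch, hh, hl⟩, hmin⟩ := (measure List.length).wf.has_min S ⟨_, hS⟩
  have shorter : ∀ l' ∈ S, l.length ≤ l'.length := fun l' hl' => not_lt.mp (hmin l' hl')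
  -- Both a repeated vertex and a chord let us cut a nonempty segment `m` out of the chain.
  have cut : ∀ s m t : List α, ∀ x : α, l = s ++ m ++ x :: t → m ≠ [] →
      (∀ y ∈ s.getLast?, r y x) → (s ++ x :: t).head? = l.head? → (s ++ x :: t) ∈ S := by
    rintro s m t x rfl hm hseam hhead
    have hch' := List.isChain_append.mp hch
    refine ⟨List.isChain_append.mpr ⟨hch'.1.left_of_append, hch'.2.1, ?_⟩, hhead.trans hh, ?_⟩
    · simpa using hseam
    · rwa [List.getLast?_append_cons] at hl ⊢
  refine ⟨l, hch, hh, hl, List.nodup_iff_sublist.mpr fun x hxx => ?_, ?_⟩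
  · obtain ⟨r₁, r₂, rfl, hx₁, hx₂⟩ := List.cons_sublist_iff.mp hxx
    obtain ⟨s, t, rfl⟩ := List.append_of_mem hx₁
    obtain ⟨u, v, rfl⟩ := List.append_of_mem (List.singleton_sublist.mp hx₂)
    have := shorter _ (cut s (x :: t ++ u) v x (by simp) (by simp) ?_ (by cases s <;> simp))
    · simp at this
      omega
    · rw [List.append_assoc, List.cons_append] at hch
      simpa using (List.isChain_append.mp hch).2.2
  · rintro x y z ⟨s, t, rfl⟩ hxz
    have := shorter _ (cut (s ++ [x]) [y] t z (by simp) (by simp) (by simpa using hxz)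
      (by cases s <;> simp))
    simp at this

theorem exists_linearOrder_of_isStrictOrder {α : Type} (r : α → α → Prop) [IsStrictOrder α r] :
    ∃ inst : LinearOrder α, ∀ a b, r a b → inst.lt a b := by
  let _ := partialOrderOfSO r
  exact ⟨(inferInstance : LinearOrder (LinearExtension α)), fun a b h =>
    lt_of_le_of_ne (toLinearExtension.monotone (Or.inr h))
      (show a ≠ b from ne_of_lt (show a < b from h))⟩

namespace MixedGraph

variable {V : Type} {G H : MixedGraph V} {a b c v w x y : V} {C S : Set V}

theorem Adj.symm (h : G.Adj v w) : G.Adj w v := by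
  unfold Adj at h ⊢
  rw [G.symm]
  cases h' : G.E v w <;> simp_all [EType.mirror]

theorem adj_comm : G.Adj v w ↔ G.Adj w v := ⟨Adj.symm, Adj.symm⟩

theorem Adj.ne (h : G.Adj v w) : v ≠ w := by
  rintro rfl
  exact h (G.no_loop v)

theorem HeadAt.adj (h : G.HeadAt v w) : G.Adj v w := by
  rcases h with h | h <;> simp [Adj, h]

theorem dir_iff : G.Dir v w ↔ G.HeadAt v w ∧ ¬ G.HeadAt w v := by
  simp only [Dir, HeadAt, G.symm v w]
  cases G.E v w <;> simp [EType.mirror]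

theorem bidir_iff : G.Bidir v w ↔ G.HeadAt v w ∧ G.HeadAt w v := by
  simp only [Bidir, HeadAt, G.symm v w]
  cases G.E v w <;> simp [EType.mirror]

theorem undir_iff : G.Undir v w ↔ G.Adj v w ∧ ¬ G.HeadAt v w ∧ ¬ G.HeadAt w v := by
  simp only [Undir, Adj, HeadAt, G.symm v w]
  cases G.E v w <;> simp [EType.mirror]

theorem eq_of_adj_iff_of_headAt_iff (hadj : ∀ v w, G.Adj v w ↔ H.Adj v w)
    (hhead : ∀ v w, G.HeadAt v w ↔ H.HeadAt v w) : G = H := by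
  have hE : G.E = H.E := by
    ext v w
    have h₁ := hadj v w
    have h₂ := hhead v w
    have h₃ := hhead w v
    simp only [Adj, HeadAt, G.symm v w, H.symm v w] at h₁ h₂ h₃
    cases hG : G.E v w <;> cases hH : H.E v w <;> simp_all [EType.mirror]
  cases G
  cases H
  cases hE
  rfl

theorem arr_eq_ncard_headAt [Finite V] : G.arr = {p : V × V | G.HeadAt p.1 p.2}.ncard := by
  rw [arr, ← Set.ncard_union_eq _ (Set.toFinite _) (Set.toFinite _)]
  · rfl
  · rw [Set.disjoint_left]
    rintro p (hp : G.E p.1 p.2 = _) (hp' : G.E p.1 p.2 = _)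
    rw [hp] at hp'
    cases hp'

theorem mem_Bd : x ∈ G.Bd v ↔ x = v ∨ G.Adj v x := Iff.rfl

theorem self_mem_Bd (v : V) : v ∈ G.Bd v := Or.inl rfl

theorem Adj.mem_Bd (h : G.Adj v w) : w ∈ G.Bd v := Or.inr h

theorem mem_Bd_comm : w ∈ G.Bd v ↔ v ∈ G.Bd w := by
  simp only [mem_Bd, adj_comm (v := v), eq_comm]

theorem adj_of_mem_Bd (h : w ∈ G.Bd v) (hne : v ≠ w) : G.Adj v w :=
  (mem_Bd.mp h).resolve_left hne.symm

theorem Simplicial.bd_subset (h : G.Simplicial v) (hw : w ∈ G.Bd v) : G.Bd v ⊆ G.Bd w := by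
  intro x hx
  by_cases hxw : w = x
  · exact hxw ▸ self_mem_Bd w
  · exact (h w hw x hx hxw).mem_Bd

theorem Simplicial.of_bd_subset (h : G.Simplicial w) (hsub : G.Bd v ⊆ G.Bd w) :
    G.Simplicial v :=
  fun x hx y hy hxy => h x (hsub hx) y (hsub hy) hxy

theorem mconn_of_adj (h : H.Adj v w) (C : Set V) : H.MConn v w C := by
  refine ⟨[v, w], ⟨⟨by simp [h.ne], List.isChain_pair.mpr h⟩, ?_⟩, rfl, rfl⟩
  rintro a b c ⟨l₁, l₂, hl⟩
  have := congrArg List.length hl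
  simp at this
  omega

theorem mconn_empty_of_not_collider (hxb : H.Adj x b) (hby : H.Adj b y) (hxy : x ≠ y)
    (hnc : ¬ H.Collider x b y) : H.MConn x y ∅ := by
  refine ⟨[x, b, y], ⟨⟨by simp [hxb.ne, hby.ne, hxy], ?_⟩, ?_⟩, rfl, rfl⟩
  · exact List.isChain_cons_cons.mpr ⟨hxb, List.isChain_pair.mpr hby⟩
  · rintro a b' c ⟨_ | ⟨z, l₁⟩, l₂, hl⟩
    · obtain ⟨rfl, rfl, rfl, -⟩ : x = a ∧ b = b' ∧ y = c ∧ [] = l₂ := by simpa using hl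
      exact ⟨fun hcol => absurd hcol hnc, fun _ => Set.notMem_empty b⟩
    · have := congrArg List.length hl
      simp at this
      omega

theorem MarkovEquiv.mconn_iff (hme : G.MarkovEquiv H) (hne : v ≠ w) (hv : v ∉ C)
    (hw : w ∉ C) : G.MConn v w C ↔ H.MConn v w C :=
  not_iff_not.mp (hme v w C hne hv hw)

theorem Ancestral.not_transGen_dir (h : H.Ancestral) : ¬ Relation.TransGen H.Dir v v := by
  intro hvv
  obtain ⟨c, hvc, hcv⟩ := Relation.TransGen.head'_iff.mp hvv
  exact h.1 v c hvc hcv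

def AdjIn (G : MixedGraph V) (S : Set V) (x y : V) : Prop := G.Adj x y ∧ x ∈ S ∧ y ∈ S

theorem reflTransGen_adjIn_of_mem_Bd {s t : V} (hs : s ∈ S) (ht : t ∈ S) (h : s ∈ G.Bd t) :
    Relation.ReflTransGen (G.AdjIn S) s t := by
  rcases mem_Bd.mp h with rfl | h
  · exact .refl
  · exact .single ⟨h.symm, hs, ht⟩

theorem _root_.ConsecTriple.mem_of_isChain_adjIn {p : List V}
    (h : ConsecTriple p a b c) (hch : p.IsChain (G.AdjIn (insert v (insert w C))))
    (hnd : p.Nodup) (hv : p.head? = some v) (hw : p.getLast? = some w) : b ∈ C :=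
  ((h.rel hch).1.2.2.resolve_left (h.ne_of_head? hnd hv)).resolve_left (h.ne_of_getLast? hnd hw)

/-- Walk along `p`, replacing each vertex by a vertex of `S` whose closed boundary contains its
own: consecutive replacements are equal or adjacent, and a simplicial vertex can reuse the
replacement of its predecessor. -/
theorem reflTransGen_adjIn_of_isChain {p : List V} {x s : V} (hch : p.IsChain G.Adj)
    (hx : p.head? = some x) (hw : p.getLast? = some w) (hwS : w ∈ S)
    (hdom : ∀ y ∈ p, G.Simplicial y ∨ ∃ t ∈ S, G.Bd y ⊆ G.Bd t)
    (hs : s ∈ S) (hxs : G.Bd x ⊆ G.Bd s) : Relation.ReflTransGen (G.AdjIn S) s w := by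
  induction p generalizing x s with
  | nil => simp at hx
  | cons y p ih =>
    obtain rfl : y = x := by simpa using hx
    rcases p with _ | ⟨z, p⟩
    · obtain rfl : y = w := by simpa using hw
      exact reflTransGen_adjIn_of_mem_Bd hs hwS (mem_Bd_comm.mp (hxs (self_mem_Bd y)))
    · have hyz : G.Adj y z := (List.isChain_cons_cons.mp hch).1
      have ih' : ∀ {t}, t ∈ S → G.Bd z ⊆ G.Bd t → Relation.ReflTransGen (G.AdjIn S) t w :=
        ih hch.tail rfl (by simpa using hw) (fun u hu => hdom u (.tail _ hu))
      rcases hdom z (by simp) with hz | ⟨t, ht, hzt⟩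
      · exact ih' hs ((hz.bd_subset hyz.symm.mem_Bd).trans hxs)
      · have hst : s ∈ G.Bd t := hzt (mem_Bd_comm.mp (hxs hyz.mem_Bd))
        exact (reflTransGen_adjIn_of_mem_Bd hs ht hst).trans (ih' ht hzt)

namespace Bidirected

variable (hG : G.Bidirected)
include hG

theorem E_eq_bidir (h : G.Adj v w) : G.E v w = .bidir :=
  (hG v w).resolve_left h

theorem not_dir : ¬ G.Dir v w := by
  rcases hG v w with h | h <;> simp [Dir, h]

theorem mem_anSet_iff : v ∈ G.anSet C ↔ v ∈ C := by
  refine ⟨fun ⟨c, hc, h⟩ => ?_, fun h => ⟨v, h, .refl⟩⟩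
  rw [Anc, Relation.reflTransGen_iff_eq fun _ => hG.not_dir] at h
  exact h ▸ hc

theorem collider (hab : G.Adj a b) (hbc : G.Adj b c) : G.Collider a b c :=
  ⟨Or.inr (hG.E_eq_bidir hab), Or.inr (hG.E_eq_bidir hbc.symm)⟩

theorem mconn_iff :
    G.MConn v w C ↔ Relation.ReflTransGen (G.AdjIn (insert v (insert w C))) v w := by
  constructor
  · rintro ⟨p, ⟨⟨-, hch⟩, htr⟩, hv, hw⟩
    have hS : ∀ x ∈ p, x ∈ insert v (insert w C) := by
      intro x hx
      rcases List.exists_consecTriple_of_mem hx with h | h | ⟨a, c, h⟩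
      · exact Or.inl (Option.some_inj.mp (h.symm.trans hv))
      · exact Or.inr (Or.inl (Option.some_inj.mp (h.symm.trans hw)))
      · have hcol := hG.collider (h.rel hch).1 (h.rel hch).2
        exact Or.inr (Or.inr (hG.mem_anSet_iff.mp ((htr a x c h).1 hcol)))
    exact (hch.imp_of_mem_imp fun x y hx hy hxy => ⟨hxy, hS x hx, hS y hy⟩).reflTransGen hv hw
  · intro h
    obtain ⟨p, hch, hv, hw, hnd, -⟩ := h.exists_chordless_chain
    have hchG : p.IsChain G.Adj := hch.imp fun _ _ h => h.1
    refine ⟨p, ⟨⟨hnd, hchG⟩, fun a b c h => ⟨fun _ => ?_, fun hnc => ?_⟩⟩, hv, hw⟩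
    · exact hG.mem_anSet_iff.mpr (h.mem_of_isChain_adjIn hch hnd hv hw)
    · exact absurd (hG.collider (h.rel hchG).1 (h.rel hchG).2) hnc

theorem adj_of_mconn_empty (h : G.MConn v w ∅) (hne : v ≠ w) : G.Adj v w := by
  rcases (hG.mconn_iff.mp h).cases_head with rfl | ⟨x, ⟨hvx, -, hx⟩, -⟩
  · exact absurd rfl hne
  · rcases hx with rfl | rfl | hx
    · exact absurd rfl hvx.ne
    · exact hvx
    · exact absurd hx (Set.notMem_empty x)

section gmin

variable [LinearOrder V]

theorem adj_gmin_iff : G.gmin.Adj v w ↔ G.Adj v w := by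
  rcases hG v w with h | h
  · simp [Adj, gmin, gminE, dropE, h]
  · simp only [Adj, gmin, gminE, dropE, h]
    split_ifs <;> simp

theorem not_headAt_gmin_iff (h : G.Adj v w) :
    ¬ G.gmin.HeadAt v w ↔ G.Simplicial w ∨ (G.Bd w ⊆ G.Bd v ∧ w < v) := by
  simp only [HeadAt, gmin, gminE, dropE, hG.E_eq_bidir h]
  by_cases hv : G.Simplicial v <;> by_cases hw : G.Simplicial w <;>
    simp only [hv, hw, if_true, if_false]
  · simp
  · simpa using fun hwv => absurd (hv.of_bd_subset hwv) hw
  · simp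
  · split_ifs with h₁ h₂
    · simpa using fun _ => h₁.2.le
    · simpa using h₂
    · simpa using h₂

theorem not_simplicial_of_headAt_gmin (h : G.gmin.HeadAt v w) : ¬ G.Simplicial w :=
  fun hw => (hG.not_headAt_gmin_iff (hG.adj_gmin_iff.mp h.adj)).mpr (Or.inl hw) h

theorem bd_subset_of_not_headAt_gmin (h : G.Adj v w) (ht : ¬ G.gmin.HeadAt v w) :
    G.Bd w ⊆ G.Bd v := by
  rcases (hG.not_headAt_gmin_iff h).mp ht with hw | ⟨hwv, -⟩
  · exact hw.bd_subset h.symm.mem_Bd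
  · exact hwv

theorem bd_subset_of_dir_gmin (h : G.gmin.Dir v w) : G.Bd v ⊆ G.Bd w :=
  have h' := dir_iff.mp h
  hG.bd_subset_of_not_headAt_gmin (hG.adj_gmin_iff.mp h'.1.adj.symm) h'.2

theorem bd_subset_of_anc_gmin (h : G.gmin.Anc v w) : G.Bd v ⊆ G.Bd w := by
  induction h with
  | refl => exact subset_rfl
  | tail _ hstep ih => exact ih.trans (hG.bd_subset_of_dir_gmin hstep)

theorem lt_of_dir_gmin (h : G.gmin.Dir v w) (hv : ¬ G.Simplicial v) :
    G.Bd v ⊆ G.Bd w ∧ v < w := by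
  have h' := dir_iff.mp h
  exact ((hG.not_headAt_gmin_iff (hG.adj_gmin_iff.mp h'.1.adj.symm)).mp h'.2).resolve_left hv

theorem lt_of_transGen_dir_gmin (h : Relation.TransGen G.gmin.Dir v w)
    (hv : ¬ G.Simplicial v) : G.Bd v ⊆ G.Bd w ∧ v < w := by
  induction h using Relation.TransGen.head_induction_on with
  | single h => exact hG.lt_of_dir_gmin h hv
  | head h _ ih =>
    obtain ⟨hsub, hlt⟩ := hG.lt_of_dir_gmin h hv
    obtain ⟨hsub', hlt'⟩ := ih (hG.not_simplicial_of_headAt_gmin (dir_iff.mp h).1)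
    exact ⟨hsub.trans hsub', hlt.trans hlt'⟩

theorem gmin_ancestral : G.gmin.Ancestral := by
  refine ⟨fun v w h hwv => ?_, fun v w h u hu => ?_, fun v w h hvw => ?_⟩
  · rcases Relation.reflTransGen_iff_eq_or_transGen.mp hwv with rfl | hwv
    · exact (dir_iff.mp h).1.adj.ne rfl
    · have hw := hG.not_simplicial_of_headAt_gmin (dir_iff.mp h).1
      exact lt_irrefl w (hG.lt_of_transGen_dir_gmin (hwv.tail h) hw).2
  · obtain ⟨hadj, htw, htv⟩ := undir_iff.mp h
    have hadj := hG.adj_gmin_iff.mp hadj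
    refine hG.not_simplicial_of_headAt_gmin hu ?_
    rcases (hG.not_headAt_gmin_iff hadj.symm).mp htv with hv | ⟨hvw, hlt⟩
    · exact hv
    rcases (hG.not_headAt_gmin_iff hadj).mp htw with hw | ⟨-, hlt'⟩
    · exact hw.of_bd_subset hvw
    · exact absurd hlt (lt_asymm hlt')
  · obtain ⟨hw, hv⟩ := bidir_iff.mp h
    rcases Relation.reflTransGen_iff_eq_or_transGen.mp hvw with rfl | hvw
    · exact hw.adj.ne rfl
    · refine (hG.not_headAt_gmin_iff (hG.adj_gmin_iff.mp hv.adj)).mpr ?_ hv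
      exact Or.inr (hG.lt_of_transGen_dir_gmin hvw (hG.not_simplicial_of_headAt_gmin hv))

theorem gmin_mconn_of_reflTransGen
    (h : Relation.ReflTransGen (G.AdjIn (insert v (insert w C))) v w) : G.gmin.MConn v w C := by
  obtain ⟨p, hch, hv, hw, hnd, hchord⟩ := h.exists_chordless_chain
  have hchG : p.IsChain G.Adj := hch.imp fun _ _ h => h.1
  refine ⟨p, ⟨⟨hnd, hchG.imp fun _ _ h => hG.adj_gmin_iff.mpr h⟩, fun a b c h => ?_⟩, hv, hw⟩
  obtain ⟨hab, hbc⟩ := h.rel hchG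
  -- a tail at `b` would put `a` and `c` into a common closed boundary, giving a chord
  have hcol : G.gmin.Collider a b c := by
    by_contra hnc
    have hac : G.Adj a c := by
      rcases not_and_or.mp hnc with hta | htc
      · exact adj_of_mem_Bd (hG.bd_subset_of_not_headAt_gmin hab hta hbc.mem_Bd)
          (h.ne_of_nodup hnd)
      · exact (adj_of_mem_Bd (hG.bd_subset_of_not_headAt_gmin hbc.symm htc hab.symm.mem_Bd)
          (h.ne_of_nodup hnd).symm).symm
    exact hchord a b c h ⟨hac, (h.rel hch).1.2.1, (h.rel hch).2.2.2⟩
  exact ⟨fun _ => ⟨b, h.mem_of_isChain_adjIn hch hnd hv hw, .refl⟩, fun hnc => absurd hcol hnc⟩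

theorem reflTransGen_of_gmin_mconn (h : G.gmin.MConn v w C) :
    Relation.ReflTransGen (G.AdjIn (insert v (insert w C))) v w := by
  set S := insert v (insert w C)
  obtain ⟨p, ⟨⟨-, hch⟩, htr⟩, hv, hw⟩ := h
  have hchG : p.IsChain G.Adj := hch.imp fun _ _ h => hG.adj_gmin_iff.mp h
  -- A collider is an ancestor of `C`; a non-simplicial non-collider has a tail towards a
  -- neighbour that is larger in the order, so downward induction along the order applies.
  have hdom : ∀ x ∈ p, ¬ G.Simplicial x → ∃ s ∈ S, G.Bd x ⊆ G.Bd s := by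
    intro x hx
    refine (p.finite_toSet.wellFoundedOn (r := (· > ·))).induction hx
      (P := fun x => ¬ G.Simplicial x → ∃ s ∈ S, G.Bd x ⊆ G.Bd s) fun x hx ih hxs => ?_
    rcases List.exists_consecTriple_of_mem hx with h | h | ⟨a, c, h⟩
    · exact ⟨x, .inl (Option.some_inj.mp (h.symm.trans hv)), subset_rfl⟩
    · exact ⟨x, .inr (.inl (Option.some_inj.mp (h.symm.trans hw))), subset_rfl⟩
    by_cases hcol : G.gmin.Collider a x c
    · obtain ⟨d, hd, hxd⟩ := (htr a x c h).1 hcol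
      exact ⟨d, .inr (.inr hd), hG.bd_subset_of_anc_gmin hxd⟩
    obtain ⟨y, hy, hyx, hty⟩ : ∃ y ∈ p, G.Adj y x ∧ ¬ G.gmin.HeadAt y x := by
      rcases not_and_or.mp hcol with hta | htc
      · exact ⟨a, h.mem_left, (h.rel hchG).1, hta⟩
      · exact ⟨c, h.mem_right, (h.rel hchG).2.symm, htc⟩
    obtain ⟨hxy, hlt⟩ := ((hG.not_headAt_gmin_iff hyx).mp hty).resolve_left hxs
    obtain ⟨s, hs, hys⟩ := ih y hy hlt fun hy => hxs (hy.of_bd_subset hxy)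
    exact ⟨s, hs, hxy.trans hys⟩
  exact reflTransGen_adjIn_of_isChain hchG hv hw (.inr (.inl rfl))
    (fun x hx => or_iff_not_imp_left.mpr (hdom x hx)) (.inl rfl) subset_rfl

theorem gmin_mconn_iff : G.gmin.MConn v w C ↔ G.MConn v w C :=
  (Iff.intro hG.reflTransGen_of_gmin_mconn hG.gmin_mconn_of_reflTransGen).trans hG.mconn_iff.symm

theorem gmin_markovEquiv : G.MarkovEquiv G.gmin :=
  fun _ _ _ _ _ _ => not_congr hG.gmin_mconn_iff.symm

theorem gmin_maximal : G.gmin.Maximal := fun v w hne hadj =>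
  ⟨∅, Set.notMem_empty v, Set.notMem_empty w, fun h =>
    hadj (hG.adj_gmin_iff.mpr (hG.adj_of_mconn_empty (hG.gmin_mconn_iff.mp h) hne))⟩

end gmin

section MarkovEquiv

variable (hme : G.MarkovEquiv H)
include hme

theorem adj_of_not_collider_of_markovEquiv (hxb : H.Adj x b) (hby : H.Adj b y)
    (hxy : x ≠ y) (hnc : ¬ H.Collider x b y) : G.Adj x y :=
  hG.adj_of_mconn_empty ((hme.mconn_iff hxy (Set.notMem_empty x) (Set.notMem_empty y)).mpr
    (mconn_empty_of_not_collider hxb hby hxy hnc)) hxy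

variable (hmax : H.Maximal)
include hmax

theorem adj_iff_of_markovEquiv : G.Adj v w ↔ H.Adj v w := by
  refine ⟨fun h => ?_, fun h => ?_⟩
  · by_contra hn
    obtain ⟨C, hv, hw, hsep⟩ := hmax v w h.ne hn
    exact hsep ((hme.mconn_iff h.ne hv hw).mp (mconn_of_adj h C))
  · exact hG.adj_of_mconn_empty ((hme.mconn_iff h.ne (Set.notMem_empty v)
      (Set.notMem_empty w)).mpr (mconn_of_adj h ∅)) h.ne

theorem bd_subset_of_not_headAt (hvw : H.Adj v w) (ht : ¬ H.HeadAt w v) :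
    G.Bd v ⊆ G.Bd w := by
  intro x hx
  by_cases hxv : x = v
  · exact hxv ▸ ((hG.adj_iff_of_markovEquiv hme hmax).mpr hvw).symm.mem_Bd
  by_cases hxw : x = w
  · rw [hxw]
    exact self_mem_Bd w
  have hxv' : H.Adj x v :=
    (hG.adj_iff_of_markovEquiv hme hmax).mp (adj_of_mem_Bd hx (Ne.symm hxv)).symm
  exact (hG.adj_of_not_collider_of_markovEquiv hme hxv' hvw hxw fun h => ht h.2).symm.mem_Bd

theorem bd_subset_of_dir (h : H.Dir v w) : G.Bd v ⊆ G.Bd w :=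
  have h' := dir_iff.mp h
  hG.bd_subset_of_not_headAt hme hmax h'.1.adj h'.2

theorem simplicial_of_forall_not_headAt (h : ∀ u, ¬ H.HeadAt u b) : G.Simplicial b := by
  intro x hx y hy hxy
  by_cases hxb : x = b
  · exact adj_of_mem_Bd (hxb ▸ hy) hxy
  have hbx := (hG.adj_iff_of_markovEquiv hme hmax).mp (adj_of_mem_Bd hx (Ne.symm hxb))
  exact adj_of_mem_Bd (hG.bd_subset_of_not_headAt hme hmax hbx (h x) hy) hxy

theorem exists_linearOrder (hanc : H.Ancestral) :
    ∃ inst : LinearOrder V,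
      (∀ v w, G.Bd v ⊂ G.Bd w → inst.lt v w) ∧ ∀ v w, H.Dir v w → inst.lt v w := by
  let r : V → V → Prop := fun a b =>
    G.Bd a ⊂ G.Bd b ∨ (G.Bd a = G.Bd b ∧ Relation.TransGen H.Dir a b)
  have : IsStrictOrder V r :=
    { irrefl := fun a h => h.elim (ssubset_irrefl _) fun h => hanc.not_transGen_dir h.2
      trans := by
        rintro a b c (hab | ⟨hab, hab'⟩) (hbc | ⟨hbc, hbc'⟩)
        · exact Or.inl (hab.trans hbc)
        · exact Or.inl (hbc ▸ hab)
        · exact Or.inl (hab ▸ hbc)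
        · exact Or.inr ⟨hab.trans hbc, hab'.trans hbc'⟩ }
  obtain ⟨inst, hinst⟩ := exists_linearOrder_of_isStrictOrder r
  refine ⟨inst, fun v w h => hinst v w (Or.inl h), fun v w h => hinst v w ?_⟩
  exact (hG.bd_subset_of_dir hme hmax h).ssubset_or_eq.imp id fun heq => ⟨heq, .single h⟩

theorem headAt_of_headAt_gmin [LinearOrder V] (hanc : H.Ancestral)
    (hdir : ∀ v w, H.Dir v w → v < w) (h : G.gmin.HeadAt v w) : H.HeadAt v w := by
  by_contra ht
  have hadj := hG.adj_gmin_iff.mp h.adj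
  have hadj' := (hG.adj_iff_of_markovEquiv hme hmax).mp hadj
  refine (hG.not_headAt_gmin_iff hadj).mpr ?_ h
  by_cases hh : H.HeadAt w v
  · exact Or.inr ⟨hG.bd_subset_of_not_headAt hme hmax hadj'.symm ht,
      hdir w v (dir_iff.mpr ⟨hh, ht⟩)⟩
  · exact Or.inl (hG.simplicial_of_forall_not_headAt hme hmax
      (hanc.2.1 w v (undir_iff.mpr ⟨hadj'.symm, hh, ht⟩)))

end MarkovEquiv

end Bidirected

end MixedGraph

/-- Every minimally oriented graph of a bi-directed graph
`G` arises from Algorithm 4.2 for some total order extending strict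
boundary containment. -/
theorem stmt14 {V : Type} [Finite V] (G Gm : MixedGraph V) (hG : G.Bidirected)
    (hmin : MinOriented G Gm) :
    ∃ inst : LinearOrder V,
      (∀ v w : V, G.Bd v ⊂ G.Bd w → inst.lt v w) ∧
      Gm = @MixedGraph.gmin V G inst := by
  obtain ⟨hanc, hmax, hme, hle⟩ := hmin
  obtain ⟨inst, hssub, hdir⟩ := hG.exists_linearOrder hme hmax hanc
  refine ⟨inst, hssub, ?_⟩
  have hheads : {p : V × V | G.gmin.HeadAt p.1 p.2} = {p | Gm.HeadAt p.1 p.2} := by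
    refine Set.eq_of_subset_of_ncard_le (fun p => hG.headAt_of_headAt_gmin hme hmax hanc hdir)
      ?_ (Set.toFinite _)
    rw [← MixedGraph.arr_eq_ncard_headAt, ← MixedGraph.arr_eq_ncard_headAt]
    exact hle _ hG.gmin_ancestral hG.gmin_maximal hG.gmin_markovEquiv
  refine MixedGraph.eq_of_adj_iff_of_headAt_iff (fun v w => ?_)
    (fun v w => Set.ext_iff.mp hheads.symm (v, w))
  exact (hG.adj_iff_of_markovEquiv hme hmax).symm.trans hG.adj_gmin_iff.symm
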